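/- If G is a König-Egerváry graph, then |corona(G)| + |core(G)| = 2α(G). -/

import Mathlib

open Set

variable {V : Type*}

/-- `S` is an independent set of `G`. -/
def IndepSet (G : SimpleGraph V) (S : Set V) : Prop :=
  ∀ x ∈ S, ∀ y ∈ S, ¬ G.Adj x y

/-- The independence number `α(G)`. -/
noncomputable def alpha (G : SimpleGraph V) : ℕ :=
  sSup {n | ∃ S : Set V, IndepSet G S ∧ S.ncard = n}

/-- `S` is a maximum independent set of `G`. -/
def MaxIndep (G : SimpleGraph V) (S : Set V) : Prop :=
  IndepSet G S ∧ S.ncard = alpha G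

/-- `Ω(G)`, the family of all maximum independent sets. -/
def Omega (G : SimpleGraph V) : Set (Set V) := {S | MaxIndep G S}

/-- `core(G)`, the intersection of all maximum independent sets. -/
def core (G : SimpleGraph V) : Set V := ⋂₀ Omega G

/-- `corona(G)`, the union of all maximum independent sets. -/
def corona (G : SimpleGraph V) : Set V := ⋃₀ Omega G

/-- The matching number `μ(G)`. -/
noncomputable def matchNum (G : SimpleGraph V) : ℕ :=
  sSup {n | ∃ M : G.Subgraph, M.IsMatching ∧ M.edgeSet.ncard = n}

/-- A matching from `X` into `Y`: an injection `f` on `X` into `Y` such that each `x ∈ X`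
is adjacent to `f x` and the edges `{x, f x}` are pairwise disjoint. -/
def MatchingFrom (G : SimpleGraph V) (X Y : Set V) : Prop :=
  ∃ f : V → V, Set.InjOn f X ∧ (∀ x ∈ X, f x ∈ Y ∧ G.Adj x (f x)) ∧
    ∀ x ∈ X, ∀ y ∈ X, x ≠ y → f x ≠ y

/-!
The inequality `2α ≤ |corona| + |core|` holds in every finite graph. Add the maximum
independent sets one at a time: if `I` is the intersection and `U` the union of those added so
far and `S` is the next one, then `W = I \ S` has at least `|W|` neighbours in `S` (otherwise
trading them for `W` would enlarge `S`), and none of them lies in `U`, since every set in `U`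
contains `W`. So adding `S` grows the union by at least as much as it shrinks the intersection.

For the reverse inequality, fix a maximum independent set `S`. In a König–Egerváry graph
`|Sᶜ| = μ`, and every edge of a maximum matching meets `Sᶜ`, so the matching sends `Sᶜ`
injectively into `S`. It sends `corona \ S` into `S \ core`: a vertex of a maximum independent
set `T` is matched to a vertex outside `T`. Hence `|corona| - α ≤ α - |core|`.
-/

section

variable {G : SimpleGraph V}

lemma IndepSet.mono {S T : Set V} (hT : IndepSet G T) (hST : S ⊆ T) : IndepSet G S :=
  fun x hx y hy => hT x (hST hx) y (hST hy)

section Finite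

variable [Finite V]

lemma bddAbove_ncard_indepSet (G : SimpleGraph V) :
    BddAbove {n | ∃ S : Set V, IndepSet G S ∧ S.ncard = n} :=
  ⟨Nat.card V, by rintro _ ⟨S, -, rfl⟩; exact ncard_le_card S⟩

lemma ncard_le_alpha {S : Set V} (hS : IndepSet G S) : S.ncard ≤ alpha G :=
  le_csSup (bddAbove_ncard_indepSet G) ⟨S, hS, rfl⟩

lemma exists_maxIndep (G : SimpleGraph V) : ∃ S, MaxIndep G S :=
  Nat.sSup_mem (s := {n | ∃ S : Set V, IndepSet G S ∧ S.ncard = n})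
    ⟨0, ∅, fun _ h => h.elim, ncard_empty V⟩ (bddAbove_ncard_indepSet G)

lemma ncard_le_ncard_inter_neighbors {S W : Set V} (hS : MaxIndep G S) (hW : IndepSet G W)
    (hWS : Disjoint W S) : W.ncard ≤ (S ∩ {y | ∃ x ∈ W, G.Adj x y}).ncard := by
  set N := {y | ∃ x ∈ W, G.Adj x y}
  have hswap : IndepSet G (S \ N ∪ W) := by
    rintro x (⟨hxS, hxN⟩ | hxW) y (⟨hyS, hyN⟩ | hyW) hxy
    · exact hS.1 x hxS y hyS hxy
    · exact hxN ⟨y, hyW, hxy.symm⟩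
    · exact hyN ⟨x, hxW, hxy⟩
    · exact hW x hxW y hyW hxy
  have hle := ncard_le_alpha hswap
  rw [ncard_union_eq (hWS.symm.mono_left sdiff_subset), ← hS.2,
    ← ncard_inter_add_ncard_sdiff_eq_ncard S N] at hle
  omega

lemma ncard_add_ncard_le_ncard_union_add_ncard_inter {S I U : Set V} (hS : MaxIndep G S)
    (hI : IndepSet G I) (hIU : ∀ x ∈ I, ∀ y ∈ U, ¬ G.Adj x y) :
    U.ncard + I.ncard ≤ (S ∪ U).ncard + (S ∩ I).ncard := by
  have hW := ncard_le_ncard_inter_neighbors hS (hI.mono sdiff_subset) disjoint_sdiff_left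
  have hN : S ∩ {y | ∃ x ∈ I \ S, G.Adj x y} ⊆ S \ U :=
    fun y ⟨hyS, x, hx, hxy⟩ => ⟨hyS, fun hyU => hIU x hx.1 y hyU hxy⟩
  have hU := ncard_sdiff_add_ncard S U
  have hI := ncard_inter_add_ncard_sdiff_eq_ncard I S
  rw [inter_comm]
  have := ncard_le_ncard hN
  omega

lemma two_mul_alpha_le_ncard_sUnion_add_ncard_sInter (𝓕 : Finset (Set V)) (h𝓕 : 𝓕.Nonempty)
    (hmax : ∀ T ∈ 𝓕, MaxIndep G T) :
    2 * alpha G ≤ (⋃₀ (𝓕 : Set (Set V))).ncard + (⋂₀ (𝓕 : Set (Set V))).ncard := by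
  induction h𝓕 using Finset.Nonempty.cons_induction with
  | singleton S => simp [(hmax S (Finset.mem_singleton_self S)).2, two_mul]
  | cons S 𝓕 hS h𝓕 ih =>
    simp only [Finset.forall_mem_cons] at hmax
    obtain ⟨T, hT⟩ := h𝓕
    rw [Finset.coe_cons, sUnion_insert, sInter_insert]
    refine (ih hmax.2).trans
      (ncard_add_ncard_le_ncard_union_add_ncard_inter hmax.1 ((hmax.2 T hT).1.mono ?_) ?_)
    · exact sInter_subset_of_mem hT
    · rintro x hx y ⟨T', hT', hyT'⟩
      exact (hmax.2 T' hT').1 x (hx T' hT') y hyT'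

lemma two_mul_alpha_le_ncard_corona_add_ncard_core (G : SimpleGraph V) :
    2 * alpha G ≤ (corona G).ncard + (core G).ncard := by
  have hfin := toFinite (Omega G)
  have h := two_mul_alpha_le_ncard_sUnion_add_ncard_sInter hfin.toFinset
    (hfin.toFinset_nonempty.mpr (exists_maxIndep G)) (fun T hT => hfin.mem_toFinset.mp hT)
  rwa [hfin.coe_toFinset] at h

lemma exists_isMatching_ncard_edgeSet_eq_matchNum (G : SimpleGraph V) :
    ∃ M : G.Subgraph, M.IsMatching ∧ M.edgeSet.ncard = matchNum G :=
  Nat.sSup_mem (s := {n | ∃ M : G.Subgraph, M.IsMatching ∧ M.edgeSet.ncard = n})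
    ⟨0, ⊥, fun _ h => h.elim, by simp⟩
    ⟨Nat.card (Sym2 V), by rintro _ ⟨M, -, rfl⟩; exact ncard_le_card _⟩

lemma SimpleGraph.Subgraph.IsMatching.compl_subset_verts_and_adj_mem {M : G.Subgraph}
    (hM : M.IsMatching) {S : Set V} (hS : IndepSet G S) (hcard : Sᶜ.ncard ≤ M.edgeSet.ncard) :
    Sᶜ ⊆ M.verts ∧ ∀ ⦃v w⦄, v ∉ S → M.Adj v w → w ∈ S := by
  let g : ↥(M.verts ∩ Sᶜ) → M.edgeSet := fun v => hM.toEdge ⟨v, v.2.1⟩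
  have hg : Function.Surjective g := by
    rintro ⟨e, he⟩
    induction e using Sym2.ind with
    | _ a b =>
      by_cases ha : a ∈ S
      · have hb : b ∉ S := fun hb => hS a ha b hb (M.adj_sub he)
        exact ⟨⟨b, M.edge_vert he.symm, hb⟩,
          (hM.toEdge_eq_of_adj he.symm).trans (by simp [Sym2.eq_swap])⟩
      · exact ⟨⟨a, M.edge_vert he, ha⟩, hM.toEdge_eq_of_adj he⟩
  have hle : M.edgeSet.ncard ≤ (M.verts ∩ Sᶜ).ncard := by
    simpa only [Nat.card_coe_set_eq] using Nat.card_le_card_of_surjective g hg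
  have hA : M.verts ∩ Sᶜ = Sᶜ :=
    eq_of_subset_of_ncard_le inter_subset_right (hcard.trans hle)
  have hginj : Function.Injective g :=
    (hg.bijective_of_nat_card_le (by simpa only [Nat.card_coe_set_eq, hA] using hcard)).1
  refine ⟨hA ▸ inter_subset_left, fun v w hv hvw => by_contra fun hw => hvw.ne ?_⟩
  have := @hginj ⟨v, M.edge_vert hvw, hv⟩ ⟨w, M.edge_vert hvw.symm, hw⟩
    (hM.toEdge_eq_toEdge_of_adj hvw)
  exact congrArg Subtype.val this

lemma exists_matchingFrom_compl (hKE : alpha G + matchNum G = Nat.card V) {S : Set V}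
    (hS : MaxIndep G S) : MatchingFrom G Sᶜ S := by
  obtain ⟨M, hM, hMcard⟩ := exists_isMatching_ncard_edgeSet_eq_matchNum G
  have hcard : Sᶜ.ncard ≤ M.edgeSet.ncard := by
    have := ncard_add_ncard_compl S
    have := hS.2
    omega
  obtain ⟨hsub, hinto⟩ := hM.compl_subset_verts_and_adj_mem hS.1 hcard
  choose! f hf using fun v (hv : v ∈ Sᶜ) => (hM (hsub hv)).exists
  exact ⟨f, fun u hu v hv huv => hM.eq_of_adj_right (hf u hu) (huv ▸ hf v hv),
    fun v hv => ⟨hinto hv (hf v hv), M.adj_sub (hf v hv)⟩,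
    fun x hx y hy _ hxy => hy (hxy ▸ hinto hx (hf x hx))⟩

lemma ncard_corona_add_ncard_core_le {S : Set V} (hS : MaxIndep G S)
    (hmatch : MatchingFrom G Sᶜ S) : (corona G).ncard + (core G).ncard ≤ 2 * alpha G := by
  obtain ⟨f, hinj, hf, -⟩ := hmatch
  have hmaps : ∀ v ∈ corona G \ S, f v ∈ S \ core G := by
    rintro v ⟨⟨T, hT, hvT⟩, hvS⟩
    exact ⟨(hf v hvS).1, fun hfv => hT.1 v hvT (f v) (hfv T hT) (hf v hvS).2⟩
  have hle := ncard_le_ncard_of_injOn f hmaps (hinj.mono fun v hv => hv.2)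
  have hcorona : (corona G \ S).ncard + S.ncard = (corona G).ncard :=
    ncard_sdiff_add_ncard_of_subset (subset_sUnion_of_mem hS)
  have hcore : (S \ core G).ncard + (core G).ncard = S.ncard :=
    ncard_sdiff_add_ncard_of_subset (sInter_subset_of_mem hS)
  have := hS.2
  omega

end Finite

end

theorem stmt_12 [Fintype V] (G : SimpleGraph V)
    (hKE : alpha G + matchNum G = Fintype.card V) :
    (corona G).ncard + (core G).ncard = 2 * alpha G := by
  obtain ⟨S, hS⟩ := exists_maxIndep G
  have hmatch := exists_matchingFrom_compl (hKE.trans Nat.card_eq_fintype_card.symm) hS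
  exact (ncard_corona_add_ncard_core_le hS hmatch).antisymm
    (two_mul_alpha_le_ncard_corona_add_ncard_core G)
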